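/- Let m > 0, 0 < δ < 1, and let f : ℝ → ℂ be measurable with ∫_ℝ ε(k)^{1−δ} |f(k)|² dk < ∞. Then ∫_{ℝ²} ε(k)^{1−δ} ε(k′)^{-2} |f(k′ − k)|² dk dk′ < ∞. -/

import Mathlib

/-! By Peetre's inequality `ε(k) ≤ (2/m) ε(k′) ε(k′ − k)`, the integrand is dominated by
`(2/m)^{1−δ} · ε(k′)^{−1−δ} · ε(k′ − k)^{1−δ} |f(k′ − k)|²`. By Tonelli and translation
invariance the integral of this bound factors as `∫ ε^{−1−δ} · ∫ ε^{1−δ} |f|²`, and the first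
factor is finite because `ε(k) ≳ 1 + |k|` and `1 + δ > 1`. -/

open MeasureTheory

/-- The one-particle energy `ε(k) = (k² + m²)^{1/2}`. -/
noncomputable def eps (m k : ℝ) : ℝ := Real.sqrt (k ^ 2 + m ^ 2)

open scoped ENNReal

section Convolution

variable {G : Type*} [AddGroup G] [MeasurableSpace G] [MeasurableAdd₂ G] [MeasurableNeg G]
  {μ : Measure G} [SFinite μ] [μ.IsAddLeftInvariant] [μ.IsNegInvariant]

theorem lintegral_prod_mul_sub {F g : G → ℝ≥0∞} (hF : Measurable F) (hg : Measurable g) :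
    ∫⁻ p, g p.2 * F (p.2 - p.1) ∂μ.prod μ = (∫⁻ y, g y ∂μ) * ∫⁻ x, F x ∂μ := by
  have hinner (y : G) : ∫⁻ x, g y * F (y - x) ∂μ = g y * ∫⁻ x, F x ∂μ := by
    rw [lintegral_const_mul _ (by fun_prop), lintegral_sub_left_eq_self]
  rw [lintegral_prod_symm' _ (by fun_prop)]
  simp_rw [hinner]
  exact lintegral_mul_const _ hg

end Convolution

section Eps

variable {m : ℝ}

theorem eps_eq_norm (m k : ℝ) : eps m k = ‖(⟨k, m⟩ : ℂ)‖ := by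
  rw [Complex.norm_def, Complex.normSq_apply, eps]
  ring_nf

theorem abs_le_eps (m k : ℝ) : |k| ≤ eps m k :=
  Real.abs_le_sqrt (by nlinarith)

theorem le_eps (m k : ℝ) : m ≤ eps m k :=
  Real.le_sqrt_of_sq_le (by nlinarith)

theorem eps_nonneg (m k : ℝ) : 0 ≤ eps m k :=
  Real.sqrt_nonneg _

theorem eps_pos (hm : 0 < m) (k : ℝ) : 0 < eps m k :=
  hm.trans_le (le_eps m k)

@[fun_prop]
theorem measurable_eps (m : ℝ) : Measurable (eps m) := by
  unfold eps
  fun_prop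

theorem eps_sub_le_add_abs (m a b : ℝ) : eps m (a - b) ≤ eps m a + |b| := by
  have h : (⟨a - b, m⟩ : ℂ) = ⟨a, m⟩ - (b : ℂ) := Complex.ext (by simp) (by simp)
  rw [eps_eq_norm, eps_eq_norm, h, ← Real.norm_eq_abs, ← Complex.norm_real]
  exact norm_sub_le _ _

theorem eps_sub_le_mul (hm : 0 < m) (a b : ℝ) :
    eps m (a - b) ≤ 2 / m * (eps m a * eps m b) := by
  have ha := le_eps m a
  have hb := le_eps m b
  rw [div_mul_eq_mul_div, le_div_iff₀ hm]
  nlinarith [eps_sub_le_add_abs m a b, abs_le_eps m b]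

theorem eps_sub_rpow_le (hm : 0 < m) {s : ℝ} (hs : 0 ≤ s) (a b : ℝ) :
    eps m (a - b) ^ s ≤ (2 / m) ^ s * (eps m a ^ s * eps m b ^ s) := by
  rw [← Real.mul_rpow (eps_pos hm a).le (eps_pos hm b).le,
    ← Real.mul_rpow (div_pos two_pos hm).le (mul_nonneg (eps_pos hm a).le (eps_pos hm b).le)]
  exact Real.rpow_le_rpow (eps_pos hm _).le (eps_sub_le_mul hm a b) hs

theorem mul_one_add_abs_le_eps (hm : 0 < m) (k : ℝ) : min m 1 / 2 * (1 + |k|) ≤ eps m k := by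
  have h₁ := le_eps m k
  have h₂ := abs_le_eps m k
  nlinarith [min_le_left m 1, min_le_right m 1, abs_nonneg k, lt_min hm one_pos]

theorem lintegral_eps_rpow_lt_top (hm : 0 < m) {s : ℝ} (hs : s < -1) :
    ∫⁻ k, ENNReal.ofReal (eps m k ^ s) < ⊤ := by
  have hc : 0 < min m 1 / 2 := half_pos (lt_min hm one_pos)
  have hdim : (Module.finrank ℝ ℝ : ℝ) < -s := by rw [Module.finrank_self]; push_cast; linarith
  have hint : Integrable fun k : ℝ => (min m 1 / 2) ^ s * (1 + ‖k‖) ^ s := by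
    simpa using (integrable_one_add_norm hdim).const_mul ((min m 1 / 2) ^ s)
  refine lt_of_le_of_lt (lintegral_mono fun k => ENNReal.ofReal_le_ofReal ?_) hint.lintegral_lt_top
  rw [Real.norm_eq_abs, ← Real.mul_rpow hc.le (by positivity)]
  exact Real.rpow_le_rpow_of_nonpos (by positivity) (mul_one_add_abs_le_eps hm k) (by linarith)

theorem eps_rpow_mul_eps_rpow_neg_two_le (hm : 0 < m) {s : ℝ} (hs : 0 ≤ s) (x y : ℝ) :
    eps m x ^ s * eps m y ^ (-(2 : ℝ)) ≤ (2 / m) ^ s * (eps m y ^ (s - 2) * eps m (y - x) ^ s) := by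
  have hpeetre := eps_sub_rpow_le hm hs y (y - x)
  rw [sub_sub_cancel] at hpeetre
  have hweight : eps m y ^ s * eps m y ^ (-(2 : ℝ)) = eps m y ^ (s - 2) := by
    rw [← Real.rpow_add (eps_pos hm y), sub_eq_add_neg]
  calc eps m x ^ s * eps m y ^ (-(2 : ℝ))
      ≤ (2 / m) ^ s * (eps m y ^ s * eps m (y - x) ^ s) * eps m y ^ (-(2 : ℝ)) :=
        mul_le_mul_of_nonneg_right hpeetre (Real.rpow_nonneg (eps_nonneg m y) _)
    _ = _ := by rw [← hweight]; ring

end Eps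

/-- Convergence of the integral `I₂` in the proof of Lemma 4.1 of the paper: for `m > 0`,
`0 < δ < 1` and measurable `f : ℝ → ℂ` with `∫ ε(k)^{1−δ}|f(k)|² dk < ∞`, one has
`∫∫ ε(k)^{1−δ} ε(k′)^{-2} |f(k′−k)|² dk dk′ < ∞`. -/
theorem stmt_8 (m δ : ℝ) (hm : 0 < m) (hδ0 : 0 < δ) (hδ1 : δ < 1)
    (f : ℝ → ℂ) (hf : Measurable f)
    (hfin : ∫⁻ k : ℝ, ENNReal.ofReal (eps m k ^ (1 - δ) * ‖f k‖ ^ 2) < ⊤) :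
    ∫⁻ p : ℝ × ℝ,
        ENNReal.ofReal (eps m p.1 ^ (1 - δ) * eps m p.2 ^ (-(2 : ℝ)) * ‖f (p.2 - p.1)‖ ^ 2)
      < ⊤ := by
  set F : ℝ → ℝ≥0∞ := fun k => ENNReal.ofReal (eps m k ^ (1 - δ) * ‖f k‖ ^ 2)
  set g : ℝ → ℝ≥0∞ := fun k => ENNReal.ofReal (eps m k ^ (1 - δ - 2))
  set C : ℝ≥0∞ := ENNReal.ofReal ((2 / m) ^ (1 - δ))
  have hF : Measurable F := by fun_prop
  have hg : Measurable g := by fun_prop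
  calc _ ≤ ∫⁻ p : ℝ × ℝ, C * (g p.2 * F (p.2 - p.1)) := lintegral_mono fun p => ?_
    _ = C * ((∫⁻ k, g k) * ∫⁻ k, F k) := by
      rw [lintegral_const_mul' _ _ ENNReal.ofReal_ne_top, Measure.volume_eq_prod,
        lintegral_prod_mul_sub hF hg]
    _ < ⊤ := ENNReal.mul_lt_top ENNReal.ofReal_lt_top
      (ENNReal.mul_lt_top (lintegral_eps_rpow_lt_top hm (by linarith)) hfin)
  rw [← ENNReal.ofReal_mul (Real.rpow_nonneg (eps_nonneg m _) _),
    ← ENNReal.ofReal_mul (Real.rpow_nonneg (div_pos two_pos hm).le _)]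
  refine ENNReal.ofReal_le_ofReal ?_
  calc eps m p.1 ^ (1 - δ) * eps m p.2 ^ (-(2 : ℝ)) * ‖f (p.2 - p.1)‖ ^ 2
      ≤ (2 / m) ^ (1 - δ) * (eps m p.2 ^ (1 - δ - 2) * eps m (p.2 - p.1) ^ (1 - δ))
          * ‖f (p.2 - p.1)‖ ^ 2 :=
        mul_le_mul_of_nonneg_right
          (eps_rpow_mul_eps_rpow_neg_two_le hm (by linarith) p.1 p.2) (by positivity)
    _ = _ := by ring
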